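/- arXiv:2109.07406 — 3 statements merged into one kernel-verified Lean document; each statement's English description precedes it below -/
import Mathlib

section
/- Let f₀, f₁, τ : ℝ → ℝ be continuous at 0, let ε₀, ε₁ : ℝ → ℝ be continuous at 0, and let γ : ℝ → ℝ be an arbitrary function. Define y₀(D) = f₀(D) + γ(D)·1[D ≥ 0] + ε₀(D) and y₁(D) = f₁(D) + γ(D)·1[D ≥ 0] + τ(D)·1[D ≥ 0] + ε₁(D). Then lim_{D→0⁺} (y₁(D) − y₀(D)) − lim_{D→0⁻} (y₁(D) − y₀(D)) = τ(0). -/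
open Filter Topology

theorem diff_in_disc_identification
    (f₀ f₁ τ ε₀ ε₁ γ y₀ y₁ : ℝ → ℝ)
    (hf₀ : ContinuousAt f₀ 0) (hf₁ : ContinuousAt f₁ 0) (hτ : ContinuousAt τ 0)
    (hε₀ : ContinuousAt ε₀ 0) (hε₁ : ContinuousAt ε₁ 0)
    (hy₀ : ∀ D, y₀ D = f₀ D + (if 0 ≤ D then γ D else 0) + ε₀ D)
    (hy₁ : ∀ D, y₁ D = f₁ D + (if 0 ≤ D then γ D else 0)
      + (if 0 ≤ D then τ D else 0) + ε₁ D)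
    (Lp Lm : ℝ)
    (hLp : Tendsto (fun D => y₁ D - y₀ D) (𝓝[>] 0) (𝓝 Lp))
    (hLm : Tendsto (fun D => y₁ D - y₀ D) (𝓝[<] 0) (𝓝 Lm)) :
    Lp - Lm = τ 0 := by
  have hg : Tendsto (fun D => f₁ D - f₀ D + τ D + (ε₁ D - ε₀ D)) (𝓝 0)
      (𝓝 (f₁ 0 - f₀ 0 + τ 0 + (ε₁ 0 - ε₀ 0))) :=
    (((hf₁.sub hf₀).add hτ).add (hε₁.sub hε₀))
  have hh : Tendsto (fun D => f₁ D - f₀ D + (ε₁ D - ε₀ D)) (𝓝 0)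
      (𝓝 (f₁ 0 - f₀ 0 + (ε₁ 0 - ε₀ 0))) :=
    ((hf₁.sub hf₀).add (hε₁.sub hε₀))
  have hp : Tendsto (fun D => y₁ D - y₀ D) (𝓝[>] 0)
      (𝓝 (f₁ 0 - f₀ 0 + τ 0 + (ε₁ 0 - ε₀ 0))) := by
    refine (hg.mono_left nhdsWithin_le_nhds).congr' ?_
    filter_upwards [self_mem_nhdsWithin] with D hD
    have : (0:ℝ) ≤ D := le_of_lt hD
    simp [hy₀, hy₁, this]; ring
  have hm : Tendsto (fun D => y₁ D - y₀ D) (𝓝[<] 0)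
      (𝓝 (f₁ 0 - f₀ 0 + (ε₁ 0 - ε₀ 0))) := by
    refine (hh.mono_left nhdsWithin_le_nhds).congr' ?_
    filter_upwards [self_mem_nhdsWithin] with D hD
    have : ¬ (0:ℝ) ≤ D := not_le.mpr hD
    simp [hy₀, hy₁, this]; ring
  have e1 : Lp = f₁ 0 - f₀ 0 + τ 0 + (ε₁ 0 - ε₀ 0) := tendsto_nhds_unique hLp hp
  have e2 : Lm = f₁ 0 - f₀ 0 + (ε₁ 0 - ε₀ 0) := tendsto_nhds_unique hLm hm
  rw [e1, e2]; ring
end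

section
/- Let f₀, f₁, τ : ℝ → ℝ be continuous at 0, ε₀, ε₁ : ℝ → ℝ continuous at 0, γ : ℝ → ℝ arbitrary but with existing one-sided limits γ⁺ = lim_{D→0⁺} γ(D). Define y_t as in the panel model y_t(D) = f_t(D) + γ(D)·1[D ≥ 0] + τ(D)·1[D ≥ 0]·1[t=1] + ε_t(D). Then (lim_{D→0⁺} y₁(D) − lim_{D→0⁻} y₁(D)) − (lim_{D→0⁺} y₀(D) − lim_{D→0⁻} y₀(D)) = τ(0), i.e., the difference of the per-period RD discontinuities equals the treatment effect at the cutoff. -/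
open Filter Topology

theorem gnt_diff_in_disc
    (f₀ f₁ τ ε₀ ε₁ γ y₀ y₁ : ℝ → ℝ)
    (hf₀ : ContinuousAt f₀ 0) (hf₁ : ContinuousAt f₁ 0) (hτ : ContinuousAt τ 0)
    (hε₀ : ContinuousAt ε₀ 0) (hε₁ : ContinuousAt ε₁ 0)
    (γp : ℝ) (hγp : Tendsto γ (𝓝[>] 0) (𝓝 γp))
    (hy₀ : ∀ D, y₀ D = f₀ D + (if 0 ≤ D then γ D else 0) + ε₀ D)
    (hy₁ : ∀ D, y₁ D = f₁ D + (if 0 ≤ D then γ D else 0)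
      + (if 0 ≤ D then τ D else 0) + ε₁ D)
    (L0p L0m L1p L1m : ℝ)
    (hL0p : Tendsto y₀ (𝓝[>] 0) (𝓝 L0p)) (hL0m : Tendsto y₀ (𝓝[<] 0) (𝓝 L0m))
    (hL1p : Tendsto y₁ (𝓝[>] 0) (𝓝 L1p)) (hL1m : Tendsto y₁ (𝓝[<] 0) (𝓝 L1m)) :
    (L1p - L1m) - (L0p - L0m) = τ 0 := by
  have hfp : Tendsto f₀ (𝓝[>] (0:ℝ)) (𝓝 (f₀ 0)) := hf₀.tendsto.mono_left nhdsWithin_le_nhds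
  have hfm : Tendsto f₀ (𝓝[<] (0:ℝ)) (𝓝 (f₀ 0)) := hf₀.tendsto.mono_left nhdsWithin_le_nhds
  have hf1p : Tendsto f₁ (𝓝[>] (0:ℝ)) (𝓝 (f₁ 0)) := hf₁.tendsto.mono_left nhdsWithin_le_nhds
  have hf1m : Tendsto f₁ (𝓝[<] (0:ℝ)) (𝓝 (f₁ 0)) := hf₁.tendsto.mono_left nhdsWithin_le_nhds
  have hτp : Tendsto τ (𝓝[>] (0:ℝ)) (𝓝 (τ 0)) := hτ.tendsto.mono_left nhdsWithin_le_nhds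
  have hε0p : Tendsto ε₀ (𝓝[>] (0:ℝ)) (𝓝 (ε₀ 0)) := hε₀.tendsto.mono_left nhdsWithin_le_nhds
  have hε0m : Tendsto ε₀ (𝓝[<] (0:ℝ)) (𝓝 (ε₀ 0)) := hε₀.tendsto.mono_left nhdsWithin_le_nhds
  have hε1p : Tendsto ε₁ (𝓝[>] (0:ℝ)) (𝓝 (ε₁ 0)) := hε₁.tendsto.mono_left nhdsWithin_le_nhds
  have hε1m : Tendsto ε₁ (𝓝[<] (0:ℝ)) (𝓝 (ε₁ 0)) := hε₁.tendsto.mono_left nhdsWithin_le_nhds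
  have hpos : ∀ᶠ D in 𝓝[>] (0:ℝ), 0 ≤ D :=
    eventually_nhdsWithin_of_forall (fun x hx => le_of_lt hx)
  have hneg : ∀ᶠ D in 𝓝[<] (0:ℝ), ¬ 0 ≤ D :=
    eventually_nhdsWithin_of_forall (fun x hx => not_le.mpr hx)
  -- y₀ right limit
  have h0p : Tendsto y₀ (𝓝[>] (0:ℝ)) (𝓝 (f₀ 0 + γp + ε₀ 0)) := by
    apply Tendsto.congr' _ ((hfp.add hγp).add hε0p)
    filter_upwards [hpos] with D hD
    simp [hy₀ D, hD]
  have h0m : Tendsto y₀ (𝓝[<] (0:ℝ)) (𝓝 (f₀ 0 + 0 + ε₀ 0)) := by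
    apply Tendsto.congr' _ ((hfm.add tendsto_const_nhds).add hε0m)
    filter_upwards [hneg] with D hD
    simp [hy₀ D, hD]
  have h1p : Tendsto y₁ (𝓝[>] (0:ℝ)) (𝓝 (f₁ 0 + γp + τ 0 + ε₁ 0)) := by
    apply Tendsto.congr' _ (((hf1p.add hγp).add hτp).add hε1p)
    filter_upwards [hpos] with D hD
    simp [hy₁ D, hD]
  have h1m : Tendsto y₁ (𝓝[<] (0:ℝ)) (𝓝 (f₁ 0 + 0 + 0 + ε₁ 0)) := by
    apply Tendsto.congr' _ (((hf1m.add tendsto_const_nhds).add tendsto_const_nhds).add hε1m)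
    filter_upwards [hneg] with D hD
    simp [hy₁ D, hD]
  have e0p := tendsto_nhds_unique hL0p h0p
  have e0m := tendsto_nhds_unique hL0m h0m
  have e1p := tendsto_nhds_unique hL1p h1p
  have e1m := tendsto_nhds_unique hL1m h1m
  rw [e0p, e0m, e1p, e1m]; ring
end

section
/- In the panel model y_t(D) = f_t(D) + γ(D)·1[D ≥ 0] + τ(D)·1[D ≥ 0]·1[t=1] + ε_t(D) with f₀, f₁, τ continuous at 0, suppose ε₁ − ε₀ has a jump at 0 of size s (one-sided limits of ε₁ − ε₀ at 0 exist and differ by s). Then the diff-in-disc estimand lim_{D→0⁺}(y₁ − y₀)(D) − lim_{D→0⁻}(y₁ − y₀)(D) equals τ(0) + s. -/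
open Filter Topology

theorem diff_in_disc_bias_sorting
    (f₀ f₁ τ ε₀ ε₁ γ y₀ y₁ : ℝ → ℝ) (s : ℝ)
    (hf₀ : ContinuousAt f₀ 0) (hf₁ : ContinuousAt f₁ 0) (hτ : ContinuousAt τ 0)
    (ep em : ℝ)
    (hep : Tendsto (fun D => ε₁ D - ε₀ D) (𝓝[>] 0) (𝓝 ep))
    (hem : Tendsto (fun D => ε₁ D - ε₀ D) (𝓝[<] 0) (𝓝 em))
    (hjump : ep - em = s)
    (hy₀ : ∀ D, y₀ D = f₀ D + (if 0 ≤ D then γ D else 0) + ε₀ D)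
    (hy₁ : ∀ D, y₁ D = f₁ D + (if 0 ≤ D then γ D else 0)
      + (if 0 ≤ D then τ D else 0) + ε₁ D)
    (Lp Lm : ℝ)
    (hLp : Tendsto (fun D => y₁ D - y₀ D) (𝓝[>] 0) (𝓝 Lp))
    (hLm : Tendsto (fun D => y₁ D - y₀ D) (𝓝[<] 0) (𝓝 Lm)) :
    Lp - Lm = τ 0 + s := by
  have hf₀' : Tendsto f₀ (𝓝[>] 0) (𝓝 (f₀ 0)) := hf₀.continuousWithinAt
  have hf₁' : Tendsto f₁ (𝓝[>] 0) (𝓝 (f₁ 0)) := hf₁.continuousWithinAt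
  have hτ' : Tendsto τ (𝓝[>] 0) (𝓝 (τ 0)) := hτ.continuousWithinAt
  have hf₀'' : Tendsto f₀ (𝓝[<] 0) (𝓝 (f₀ 0)) := hf₀.continuousWithinAt
  have hf₁'' : Tendsto f₁ (𝓝[<] 0) (𝓝 (f₁ 0)) := hf₁.continuousWithinAt
  have hgp : Tendsto (fun D => f₁ D - f₀ D + τ D + (ε₁ D - ε₀ D)) (𝓝[>] 0)
      (𝓝 (f₁ 0 - f₀ 0 + τ 0 + ep)) := ((hf₁'.sub hf₀').add hτ').add hep
  have hgm : Tendsto (fun D => f₁ D - f₀ D + (ε₁ D - ε₀ D)) (𝓝[<] 0)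
      (𝓝 (f₁ 0 - f₀ 0 + em)) := (hf₁''.sub hf₀'').add hem
  have heqp : Tendsto (fun D => y₁ D - y₀ D) (𝓝[>] 0) (𝓝 (f₁ 0 - f₀ 0 + τ 0 + ep)) := by
    refine hgp.congr' ?_
    filter_upwards [self_mem_nhdsWithin] with D (hD : 0 < D)
    rw [hy₀, hy₁, if_pos hD.le, if_pos hD.le]; ring
  have heqm : Tendsto (fun D => y₁ D - y₀ D) (𝓝[<] 0) (𝓝 (f₁ 0 - f₀ 0 + em)) := by
    refine hgm.congr' ?_
    filter_upwards [self_mem_nhdsWithin] with D (hD : D < 0)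
    rw [hy₀, hy₁, if_neg (not_le.2 hD), if_neg (not_le.2 hD)]; ring
  have h1 : Lp = f₁ 0 - f₀ 0 + τ 0 + ep := tendsto_nhds_unique hLp heqp
  have h2 : Lm = f₁ 0 - f₀ 0 + em := tendsto_nhds_unique hLm heqm
  rw [h1, h2, ← hjump]; ring
end
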